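/- arXiv:2408.05027 — 5 statements merged into one kernel-verified Lean document; each statement's English description precedes it below -/
import Mathlib

section
/- Let k ≥ 5 and c ≥ 1 be integers and let c' = C(kc, ⌊kc/2⌋) (the binomial coefficient of kc choose ⌊kc/2⌋). Then every k-vertex-critical (co-gem, P5, P3 + cP2)-free graph is (P3 + c'P1)-free. -/
open SimpleGraph

/-- `G` contains `H` as an induced subgraph: there is an injection preserving
adjacency and non-adjacency (a graph embedding). -/
def HasInducedSubgraph {V W : Type*} (G : SimpleGraph V) (H : SimpleGraph W) : Prop :=
  Nonempty (H ↪g G)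

/-- `G` is `H`-free: it contains no induced subgraph isomorphic to `H`. -/
def IsHFree {V W : Type*} (G : SimpleGraph V) (H : SimpleGraph W) : Prop :=
  ¬ HasInducedSubgraph G H

/-- `G` is `k`-vertex-critical: `χ(G) = k` and `χ(G - v) < k` for every vertex `v`. -/
def IsKVertexCritical {V : Type*} (k : ℕ) (G : SimpleGraph V) : Prop :=
  G.chromaticNumber = k ∧ ∀ v : V, (G.induce {v}ᶜ).chromaticNumber < k

/-- The co-gem `P₄ + P₁`: a path `0-1-2-3` together with the isolated vertex `4`. -/
def cogem : SimpleGraph (Fin 5) :=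
  SimpleGraph.fromRel (fun u v =>
    (u = 0 ∧ v = 1) ∨ (u = 1 ∧ v = 2) ∨ (u = 2 ∧ v = 3))

/-- The path `P₅` on 5 vertices: `0-1-2-3-4`. -/
def P5 : SimpleGraph (Fin 5) :=
  SimpleGraph.fromRel (fun u v =>
    (u = 0 ∧ v = 1) ∨ (u = 1 ∧ v = 2) ∨ (u = 2 ∧ v = 3) ∨ (u = 3 ∧ v = 4))

/-- `P₃ + cP₂`: a path on 3 vertices together with `c` disjoint edges. -/
def P3cP2 (c : ℕ) : SimpleGraph (Fin 3 ⊕ Fin c × Fin 2) :=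
  SimpleGraph.fromRel (fun u v =>
    (u = Sum.inl 0 ∧ v = Sum.inl 1) ∨ (u = Sum.inl 1 ∧ v = Sum.inl 2) ∨
    (∃ i : Fin c, u = Sum.inr (i, 0) ∧ v = Sum.inr (i, 1)))

/-- `P₃ + cP₁`: a path on 3 vertices together with `c` isolated vertices. -/
def P3cP1 (c : ℕ) : SimpleGraph (Fin 3 ⊕ Fin c) :=
  SimpleGraph.fromRel (fun u v =>
    (u = Sum.inl 0 ∧ v = Sum.inl 1) ∨ (u = Sum.inl 1 ∧ v = Sum.inl 2))

/-- `2P₂`: two disjoint edges `0-1` and `2-3`. -/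
def twoP2 : SimpleGraph (Fin 4) :=
  SimpleGraph.fromRel (fun u v => (u = 0 ∧ v = 1) ∨ (u = 2 ∧ v = 3))

/-- `paw + P₁`: a triangle `0,1,2`, a vertex `3` adjacent exactly to `0`,
and the isolated vertex `4`. -/
def pawP1 : SimpleGraph (Fin 5) :=
  SimpleGraph.fromRel (fun u v =>
    (u = 0 ∧ v = 1) ∨ (u = 0 ∧ v = 2) ∨ (u = 1 ∧ v = 2) ∨ (u = 0 ∧ v = 3))

/-- `K₃ + P₁`: a triangle together with an isolated vertex. -/
def K3P1 : SimpleGraph (Fin 4) :=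
  SimpleGraph.fromRel (fun u v =>
    (u = 0 ∧ v = 1) ∨ (u = 0 ∧ v = 2) ∨ (u = 1 ∧ v = 2))

/-- The cycle `C₅` on 5 vertices. -/
def C5 : SimpleGraph (Fin 5) :=
  SimpleGraph.fromRel (fun u v =>
    (u = 0 ∧ v = 1) ∨ (u = 1 ∧ v = 2) ∨ (u = 2 ∧ v = 3) ∨ (u = 3 ∧ v = 4) ∨ (u = 4 ∧ v = 0))

lemma no_cogem {V : Type} {G : SimpleGraph V} (h1 : IsHFree G cogem)
    (v0 v1 v2 v3 v4 : V)
    (a01 : G.Adj v0 v1) (a12 : G.Adj v1 v2) (a23 : G.Adj v2 v3)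
    (n02 : ¬G.Adj v0 v2) (n03 : ¬G.Adj v0 v3) (n13 : ¬G.Adj v1 v3)
    (n40 : ¬G.Adj v4 v0) (n41 : ¬G.Adj v4 v1) (n42 : ¬G.Adj v4 v2) (n43 : ¬G.Adj v4 v3)
    (d02 : v0 ≠ v2) (d03 : v0 ≠ v3) (d13 : v1 ≠ v3)
    (d40 : v4 ≠ v0) (d41 : v4 ≠ v1) (d42 : v4 ≠ v2) (d43 : v4 ≠ v3) : False := by
  apply h1
  refine ⟨⟨⟨![v0,v1,v2,v3,v4], ?_⟩, ?_⟩⟩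
  · intro a b hab
    fin_cases a <;> fin_cases b <;>
      simp_all <;> first
      | rfl
      | (exact absurd hab a01.ne) | (exact absurd hab a01.ne')
      | (exact absurd hab a12.ne) | (exact absurd hab a12.ne')
      | (exact absurd hab a23.ne) | (exact absurd hab a23.ne')
  · intro a b
    fin_cases a <;> fin_cases b <;>
      simp [cogem, SimpleGraph.fromRel_adj] <;> first
      | exact a01 | exact a01.symm | exact a12 | exact a12.symm
      | exact a23 | exact a23.symm
      | exact n02 | exact n03 | exact n13 | exact n40 | exact n41 | exact n42 | exact n43
      | exact fun h => n02 h.symm | exact fun h => n03 h.symm | exact fun h => n13 h.symm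
      | exact fun h => n40 h.symm | exact fun h => n41 h.symm | exact fun h => n42 h.symm
      | exact fun h => n43 h.symm
      | exact G.loopless _

lemma no_P5 {V : Type} {G : SimpleGraph V} (h2 : IsHFree G P5)
    (v0 v1 v2 v3 v4 : V)
    (a01 : G.Adj v0 v1) (a12 : G.Adj v1 v2) (a23 : G.Adj v2 v3) (a34 : G.Adj v3 v4)
    (n02 : ¬G.Adj v0 v2) (n03 : ¬G.Adj v0 v3) (n04 : ¬G.Adj v0 v4)
    (n13 : ¬G.Adj v1 v3) (n14 : ¬G.Adj v1 v4) (n24 : ¬G.Adj v2 v4)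
    (d02 : v0 ≠ v2) (d03 : v0 ≠ v3) (d04 : v0 ≠ v4)
    (d13 : v1 ≠ v3) (d14 : v1 ≠ v4) (d24 : v2 ≠ v4) : False := by
  apply h2
  refine ⟨⟨⟨![v0,v1,v2,v3,v4], ?_⟩, ?_⟩⟩
  · intro a b hab
    fin_cases a <;> fin_cases b <;> simp_all
  · intro a b
    fin_cases a <;> fin_cases b <;>
      simp [P5, SimpleGraph.fromRel_adj] <;> first
      | exact a01 | exact a01.symm | exact a12 | exact a12.symm
      | exact a23 | exact a23.symm | exact a34 | exact a34.symm
      | exact n02 | exact n03 | exact n04 | exact n13 | exact n14 | exact n24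
      | exact fun h => n02 h.symm | exact fun h => n03 h.symm | exact fun h => n04 h.symm
      | exact fun h => n13 h.symm | exact fun h => n14 h.symm | exact fun h => n24 h.symm

set_option maxHeartbeats 1000000 in
lemma no_P3cP2 {V : Type} {G : SimpleGraph V} {c : ℕ} (h3 : IsHFree G (P3cP2 c))
    (va vb vc : V) (U W : Fin c → V)
    (aab : G.Adj va vb) (abc : G.Adj vb vc) (nac : ¬G.Adj va vc) (dac : va ≠ vc)
    (hUW : ∀ i, G.Adj (U i) (W i))
    (hU : ∀ i, ¬G.Adj va (U i) ∧ ¬G.Adj vb (U i) ∧ ¬G.Adj vc (U i)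
        ∧ va ≠ U i ∧ vb ≠ U i ∧ vc ≠ U i)
    (hW : ∀ i, ¬G.Adj va (W i) ∧ ¬G.Adj vb (W i) ∧ ¬G.Adj vc (W i)
        ∧ va ≠ W i ∧ vb ≠ W i ∧ vc ≠ W i)
    (hcross : ∀ i j, i ≠ j → ¬G.Adj (U i) (U j) ∧ ¬G.Adj (U i) (W j)
        ∧ ¬G.Adj (W i) (W j) ∧ U i ≠ U j ∧ U i ≠ W j ∧ W i ≠ W j) : False := by
  apply h3
  obtain ⟨f, hf⟩ : ∃ f : Fin 3 ⊕ Fin c × Fin 2 → V,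
      f = Sum.elim ![va, vb, vc] (fun p => if p.2 = 0 then U p.1 else W p.1) := ⟨_, rfl⟩
  refine ⟨⟨⟨f, ?_⟩, ?_⟩⟩
  · rintro (x | ⟨i, j⟩) (y | ⟨i', j'⟩) hxy
    · fin_cases x <;> fin_cases y <;> simp_all [hf]
    · exfalso
      fin_cases x <;> fin_cases j' <;> simp_all [hf] <;>
        first
        | exact (hU i').2.2.2.1 hxy
        | exact (hU i').2.2.2.2.1 hxy
        | exact (hU i').2.2.2.2.2 hxy
        | exact (hW i').2.2.2.1 hxy
        | exact (hW i').2.2.2.2.1 hxy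
        | exact (hW i').2.2.2.2.2 hxy
    · exfalso
      fin_cases y <;> fin_cases j <;> simp_all [hf] <;>
        first
        | exact (hU i).2.2.2.1 hxy.symm
        | exact (hU i).2.2.2.2.1 hxy.symm
        | exact (hU i).2.2.2.2.2 hxy.symm
        | exact (hW i).2.2.2.1 hxy.symm
        | exact (hW i).2.2.2.2.1 hxy.symm
        | exact (hW i).2.2.2.2.2 hxy.symm
    · by_cases hii : i = i'
      · subst hii
        fin_cases j <;> fin_cases j' <;> simp_all [hf] <;>
          first
          | rfl
          | exact absurd hxy (hUW i).ne
          | exact absurd hxy.symm (hUW i).ne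
      · exfalso
        fin_cases j <;> fin_cases j' <;> simp_all [hf] <;>
          first
          | exact (hcross i i' hii).2.2.2.1 hxy
          | exact (hcross i i' hii).2.2.2.2.1 hxy
          | exact (hcross i i' hii).2.2.2.2.2 hxy
          | exact (hcross i' i (Ne.symm hii)).2.2.2.2.1 hxy.symm
  · rintro (x | ⟨i, j⟩) (y | ⟨i', j'⟩)
    · fin_cases x <;> fin_cases y <;>
        simp [P3cP2, SimpleGraph.fromRel_adj, hf] <;>
        first
        | exact aab
        | exact aab.symm
        | exact abc
        | exact abc.symm
        | exact nac
        | exact fun h => nac h.symm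
        | exact G.loopless.irrefl _
    · fin_cases x <;> fin_cases j' <;>
        simp [P3cP2, SimpleGraph.fromRel_adj, hf] <;>
        first
        | exact (hU i').1
        | exact (hU i').2.1
        | exact (hU i').2.2.1
        | exact (hW i').1
        | exact (hW i').2.1
        | exact (hW i').2.2.1
    · fin_cases y <;> fin_cases j <;>
        simp [P3cP2, SimpleGraph.fromRel_adj, hf] <;>
        first
        | exact fun h => (hU i).1 h.symm
        | exact fun h => (hU i).2.1 h.symm
        | exact fun h => (hU i).2.2.1 h.symm
        | exact fun h => (hW i).1 h.symm
        | exact fun h => (hW i).2.1 h.symm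
        | exact fun h => (hW i).2.2.1 h.symm
    · by_cases hii : i = i'
      · subst hii
        fin_cases j <;> fin_cases j' <;>
          simp [P3cP2, SimpleGraph.fromRel_adj, hf] <;>
          first
          | exact fun h => (G.loopless.irrefl _ h)
          | exact ⟨fun _ => ⟨i, rfl, rfl⟩, fun _ => hUW i⟩
          | exact ⟨fun _ => ⟨i, rfl, rfl⟩, fun _ => (hUW i).symm⟩
          | exact hUW i
          | exact (hUW i).symm
          | skip
      · fin_cases j <;> fin_cases j' <;>
          simp [P3cP2, SimpleGraph.fromRel_adj, hf] <;>
          first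
          | exact ⟨fun h => absurd h (hcross i i' hii).1, fun h => absurd h.1 hii⟩
          | exact ⟨fun h => absurd h (hcross i i' hii).2.1, fun h => absurd h.1 hii⟩
          | exact ⟨fun h => absurd h (hcross i i' hii).2.2.1, fun h => absurd h.1 hii⟩
          | exact ⟨fun h => absurd h.symm (hcross i' i (Ne.symm hii)).2.1, fun h => absurd h.1 (Ne.symm hii)⟩
          | exact (hcross i i' hii).1
          | exact (hcross i i' hii).2.1
          | exact (hcross i i' hii).2.2.1
          | exact fun h => (hcross i' i (Ne.symm hii)).2.1 h.symm
          | exact ⟨fun h => absurd h (hcross i i' hii).2.1, fun h => absurd h (Ne.symm hii)⟩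
          | exact ⟨fun h => absurd h (hcross i i' hii).2.1, fun h => absurd h hii⟩
          | exact ⟨fun h => absurd h.symm (hcross i' i (Ne.symm hii)).2.1, fun h => absurd h hii⟩
          | exact ⟨fun h => absurd h.symm (hcross i' i (Ne.symm hii)).2.1, fun h => absurd h (Ne.symm hii)⟩
          | skip

lemma crit_witness {V : Type} [Fintype V] {G : SimpleGraph V} {k : ℕ} (hk : 1 ≤ k)
    (hcrit : IsKVertexCritical k G) (u w : V) (hne : u ≠ w) (hnadj : ¬G.Adj u w) :
    ∃ x, G.Adj u x ∧ ¬G.Adj w x := by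
  classical
  by_contra hcon
  push_neg at hcon
  have hlt := hcrit.2 u
  have hcol : (G.induce {u}ᶜ).Colorable (k-1) := by
    rw [← chromaticNumber_le_iff_colorable]
    have hcast : ((k - 1 : ℕ) : ℕ∞) + 1 = (k : ℕ∞) := by
      have : (k - 1) + 1 = k := by omega
      exact_mod_cast congrArg (Nat.cast : ℕ → ℕ∞) this
    rw [← hcast] at hlt
    exact Order.le_of_lt_add_one hlt
  obtain ⟨ψ⟩ := hcol
  have hwmem : w ∈ ({u}ᶜ : Set V) := by simp [Ne.symm hne]
  have hmem : ∀ {v : V}, ¬ v = u → v ∈ ({u}ᶜ : Set V) := by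
    intro v h; simpa using h
  have hcolG : G.Colorable (k-1) := by
    refine ⟨Coloring.mk
      (fun v => if h : v = u then ψ ⟨w, hwmem⟩ else ψ ⟨v, hmem h⟩) ?_⟩
    intro x y hxy
    by_cases hx : x = u <;> by_cases hy : y = u
    · exfalso; rw [hx, hy] at hxy; exact G.loopless.irrefl u hxy
    · simp only [dif_pos hx, dif_neg hy]
      have haw : G.Adj w y := hcon y (hx ▸ hxy)
      have h2 : (G.induce {u}ᶜ).Adj ⟨w, hwmem⟩ ⟨y, hmem hy⟩ := by simp [haw]
      exact ψ.valid h2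
    · simp only [dif_pos hy, dif_neg hx]
      have haw : G.Adj w x := hcon x (hy ▸ hxy.symm)
      have h2 : (G.induce {u}ᶜ).Adj ⟨x, hmem hx⟩ ⟨w, hwmem⟩ := by simp [haw.symm]
      exact ψ.valid h2
    · simp only [dif_neg hx, dif_neg hy]
      have h2 : (G.induce {u}ᶜ).Adj ⟨x, hmem hx⟩ ⟨y, hmem hy⟩ := by simp [hxy]
      exact ψ.valid h2
  rw [← chromaticNumber_le_iff_colorable, hcrit.1] at hcolG
  rw [Nat.cast_le] at hcolG
  omega

lemma KVCaux_choose_half_succ (n : ℕ) :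
    n.choose (n/2) ≤ (n+1).choose ((n+1)/2) ∧
      (1 ≤ n → n.choose (n/2) < (n+1).choose ((n+1)/2)) := by
  rcases Nat.even_or_odd n with ⟨r, hr⟩ | ⟨r, hr⟩
  · subst hr
    rcases Nat.eq_zero_or_pos r with rfl | hrpos
    · simp
    · have h2 : (r + r) / 2 = r := by omega
      have h3 : (r + r + 1) / 2 = r := by omega
      rw [h2, h3]
      obtain ⟨r', rfl⟩ : ∃ r', r = r' + 1 := ⟨r - 1, by omega⟩
      have hid : (r' + 1 + (r' + 1) + 1).choose (r' + 1) =
          (r' + 1 + (r' + 1)).choose r' + (r' + 1 + (r' + 1)).choose (r' + 1) := by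
        have := Nat.choose_succ_succ (r' + 1 + (r' + 1)) r'
        simpa using this
      have hpos : 0 < (r' + 1 + (r' + 1)).choose r' := Nat.choose_pos (by omega)
      constructor
      · omega
      · intro _; omega
  · subst hr
    have h2 : (2 * r + 1) / 2 = r := by omega
    have h3 : (2 * r + 1 + 1) / 2 = r + 1 := by omega
    rw [h2, h3]
    have hid : (2 * r + 1 + 1).choose (r + 1) =
        (2 * r + 1).choose r + (2 * r + 1).choose (r + 1) := Nat.choose_succ_succ _ _
    have hpos : 0 < (2 * r + 1).choose (r + 1) := Nat.choose_pos (by omega)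
    constructor
    · omega
    · intro _; omega

lemma KVCaux_choose_half_mono {m n : ℕ} (h : m ≤ n) :
    m.choose (m/2) ≤ n.choose (n/2) := by
  induction n with
  | zero => simp_all
  | succ n ih =>
    rcases Nat.lt_or_ge m (n+1) with hlt | hge
    · exact le_trans (ih (by omega)) (KVCaux_choose_half_succ n).1
    · have : m = n + 1 := by omega
      subst this; exact le_rfl

lemma KVCaux_choose_half_strict {n : ℕ} (h : 1 ≤ n) :
    n.choose (n/2) < (n+1).choose ((n+1)/2) :=
  (KVCaux_choose_half_succ n).2 h

theorem kVertexCritical_cogem_P5_P3cP2_free_is_P3cPrimeP1_free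
    (k c : ℕ) (hk : 5 ≤ k) (hc : 1 ≤ c)
    (V : Type) [Fintype V] (G : SimpleGraph V)
    (hcrit : IsKVertexCritical k G)
    (h1 : IsHFree G cogem) (h2 : IsHFree G P5) (h3 : IsHFree G (P3cP2 c)) :
    IsHFree G (P3cP1 (Nat.choose (k * c) ((k * c) / 2))) := by
  classical
  set n : ℕ := Nat.choose (k * c) ((k * c) / 2) with hn
  intro hsub
  obtain ⟨e⟩ : Nonempty ((P3cP1 n) ↪g G) := hsub
  -- the vertices of the induced P3 + nP1
  set a : V := e (Sum.inl 0) with ha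
  set b : V := e (Sum.inl 1) with hb
  set cc : V := e (Sum.inl 2) with hcc
  set ℓ : Fin n → V := fun i => e (Sum.inr i) with hℓ
  -- adjacency facts from the embedding
  have hab : G.Adj a b := by
    rw [ha, hb, e.map_rel_iff]
    simp [P3cP1, SimpleGraph.fromRel_adj]
  have hbc : G.Adj b cc := by
    rw [hb, hcc, e.map_rel_iff]
    simp [P3cP1, SimpleGraph.fromRel_adj]
  have hnac : ¬G.Adj a cc := by
    rw [ha, hcc, e.map_rel_iff]
    simp [P3cP1, SimpleGraph.fromRel_adj]
  have hdac : a ≠ cc := by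
    intro h; have := e.injective (ha ▸ hcc ▸ h); simp at this
  have hdab : a ≠ b := hab.ne
  have hdbc : b ≠ cc := hbc.ne
  have hnaℓ : ∀ i, ¬G.Adj a (ℓ i) := by
    intro i h
    rw [ha, hℓ, e.map_rel_iff] at h
    simp [P3cP1, SimpleGraph.fromRel_adj] at h
  have hnbℓ : ∀ i, ¬G.Adj b (ℓ i) := by
    intro i h
    rw [hb, hℓ, e.map_rel_iff] at h
    simp [P3cP1, SimpleGraph.fromRel_adj] at h
  have hncℓ : ∀ i, ¬G.Adj cc (ℓ i) := by
    intro i h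
    rw [hcc, hℓ, e.map_rel_iff] at h
    simp [P3cP1, SimpleGraph.fromRel_adj] at h
  have hnℓℓ : ∀ i j, ¬G.Adj (ℓ i) (ℓ j) := by
    intro i j h
    rw [hℓ, e.map_rel_iff] at h
    simp [P3cP1, SimpleGraph.fromRel_adj] at h
  have hdℓa : ∀ i, ℓ i ≠ a := by
    intro i h; have := e.injective (hℓ ▸ ha ▸ h); simp at this
  have hdℓb : ∀ i, ℓ i ≠ b := by
    intro i h; have := e.injective (hℓ ▸ hb ▸ h); simp at this
  have hdℓc : ∀ i, ℓ i ≠ cc := by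
    intro i h; have := e.injective (hℓ ▸ hcc ▸ h); simp at this
  have hdℓℓ : ∀ i j, i ≠ j → ℓ i ≠ ℓ j := by
    intro i j hij h
    have := e.injective (hℓ ▸ h)
    simp at this
    exact hij this
  -- if x is adjacent to some ℓ i then x is not any ℓ m
  have hnotℓ : ∀ (x : V) (m i : Fin n), G.Adj x (ℓ i) → x ≠ ℓ m := by
    intro x m i hadj heq
    rw [heq] at hadj
    exact hnℓℓ m i hadj
  have hnota : ∀ (x : V) (i : Fin n), G.Adj x (ℓ i) → x ≠ a := by
    intro x i hadj heq; rw [heq] at hadj; exact hnaℓ i hadj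
  have hnotb : ∀ (x : V) (i : Fin n), G.Adj x (ℓ i) → x ≠ b := by
    intro x i hadj heq; rw [heq] at hadj; exact hnbℓ i hadj
  have hnotc : ∀ (x : V) (i : Fin n), G.Adj x (ℓ i) → x ≠ cc := by
    intro x i hadj heq; rw [heq] at hadj; exact hncℓ i hadj
  -- traces on the independent set
  set τ : V → Finset (Fin n) := fun x => Finset.univ.filter (fun i => G.Adj x (ℓ i)) with hτ
  have hτmem : ∀ x i, i ∈ τ x ↔ G.Adj x (ℓ i) := by
    intro x i; rw [hτ]; simp
  -- mixed vertices
  set MA : Finset V := Finset.univ.filter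
    (fun x => (¬G.Adj a x ∧ ¬G.Adj b x ∧ ¬G.Adj cc x) ∧ τ x ≠ ∅ ∧ τ x ≠ Finset.univ) with hMA
  set MD : Finset V := Finset.univ.filter
    (fun x => (G.Adj a x ∧ G.Adj b x ∧ G.Adj cc x) ∧ τ x ≠ ∅ ∧ τ x ≠ Finset.univ) with hMD
  -- every mixed vertex is in MA or MD
  have hMIX : ∀ (x : V) (i j : Fin n), G.Adj x (ℓ i) → ¬G.Adj x (ℓ j) →
      x ∈ MA ∨ x ∈ MD := by
    intro x i j hxi hxj
    have hij : j ≠ i := by rintro rfl; exact hxj hxi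
    have hte : τ x ≠ ∅ := by
      intro h
      have hm : i ∈ τ x := (hτmem x i).mpr hxi
      rw [h] at hm; simp at hm
    have htu : τ x ≠ Finset.univ := by
      intro h
      have hm : j ∈ τ x := by rw [h]; exact Finset.mem_univ j
      exact hxj ((hτmem x j).mp hm)
    by_cases hA : G.Adj a x <;> by_cases hB : G.Adj b x <;> by_cases hC : G.Adj cc x
    · -- (T,T,T) : x ∈ MD
      right
      rw [hMD]
      simp only [Finset.mem_filter, Finset.mem_univ, true_and]
      exact ⟨⟨hA, hB, hC⟩, hte, htu⟩
    · -- (T,T,F) : cogem ℓi-x-b-cc + ℓj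
      exact False.elim (no_cogem h1 (ℓ i) x b cc (ℓ j)
        hxi.symm hB.symm hbc
        (fun h => hnbℓ i h.symm) (fun h => hncℓ i h.symm) (fun h => hC h.symm)
        (hnℓℓ j i) (fun h => hxj h.symm) (fun h => hnbℓ j h.symm) (fun h => hncℓ j h.symm)
        (hdℓb i) (hdℓc i) (hnotc x i hxi)
        (hdℓℓ j i hij) ((hnotℓ x j i hxi).symm) (hdℓb j) (hdℓc j))
    · -- (T,F,T) : cogem ℓi-x-a-b + ℓj
      exact False.elim (no_cogem h1 (ℓ i) x a b (ℓ j)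
        hxi.symm hA.symm hab
        (fun h => hnaℓ i h.symm) (fun h => hnbℓ i h.symm) (fun h => hB h.symm)
        (hnℓℓ j i) (fun h => hxj h.symm) (fun h => hnaℓ j h.symm) (fun h => hnbℓ j h.symm)
        (hdℓa i) (hdℓb i) (hnotb x i hxi)
        (hdℓℓ j i hij) ((hnotℓ x j i hxi).symm) (hdℓa j) (hdℓb j))
    · -- (T,F,F) : P5 ℓi-x-a-b-cc
      exact False.elim (no_P5 h2 (ℓ i) x a b cc
        hxi.symm hA.symm hab hbc
        (fun h => hnaℓ i h.symm) (fun h => hnbℓ i h.symm) (fun h => hncℓ i h.symm)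
        (fun h => hB h.symm) (fun h => hC h.symm) hnac
        (hdℓa i) (hdℓb i) (hdℓc i) (hnotb x i hxi) (hnotc x i hxi) hdac)
    · -- (F,T,T) : cogem ℓi-x-b-a + ℓj
      exact False.elim (no_cogem h1 (ℓ i) x b a (ℓ j)
        hxi.symm hB.symm hab.symm
        (fun h => hnbℓ i h.symm) (fun h => hnaℓ i h.symm) (fun h => hA h.symm)
        (hnℓℓ j i) (fun h => hxj h.symm) (fun h => hnbℓ j h.symm) (fun h => hnaℓ j h.symm)
        (hdℓb i) (hdℓa i) (hnota x i hxi)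
        (hdℓℓ j i hij) ((hnotℓ x j i hxi).symm) (hdℓb j) (hdℓa j))
    · -- (F,T,F) : cogem ℓi-x-b-a + ℓj
      exact False.elim (no_cogem h1 (ℓ i) x b a (ℓ j)
        hxi.symm hB.symm hab.symm
        (fun h => hnbℓ i h.symm) (fun h => hnaℓ i h.symm) (fun h => hA h.symm)
        (hnℓℓ j i) (fun h => hxj h.symm) (fun h => hnbℓ j h.symm) (fun h => hnaℓ j h.symm)
        (hdℓb i) (hdℓa i) (hnota x i hxi)
        (hdℓℓ j i hij) ((hnotℓ x j i hxi).symm) (hdℓb j) (hdℓa j))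
    · -- (F,F,T) : P5 ℓi-x-cc-b-a
      exact False.elim (no_P5 h2 (ℓ i) x cc b a
        hxi.symm hC.symm hbc.symm hab.symm
        (fun h => hncℓ i h.symm) (fun h => hnbℓ i h.symm) (fun h => hnaℓ i h.symm)
        (fun h => hB h.symm) (fun h => hA h.symm) (fun h => hnac h.symm)
        (hdℓc i) (hdℓb i) (hdℓa i) (hnotb x i hxi) (hnota x i hxi) (Ne.symm hdac))
    · -- (F,F,F) : x ∈ MA
      left
      rw [hMA]
      simp only [Finset.mem_filter, Finset.mem_univ, true_and]
      exact ⟨⟨hA, hB, hC⟩, hte, htu⟩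
  set TA : Finset (Finset (Fin n)) := MA.image τ with hTA
  set TD : Finset (Finset (Fin n)) := MD.image τ with hTD
  -- coloring
  have hcolk : G.Colorable k := by
    rw [← chromaticNumber_le_iff_colorable]
    exact le_of_eq hcrit.1
  obtain ⟨φ⟩ := hcolk
  -- distinct traces in MD force adjacency
  have hMDmem : ∀ x, x ∈ MD ↔
      ((G.Adj a x ∧ G.Adj b x ∧ G.Adj cc x) ∧ τ x ≠ ∅ ∧ τ x ≠ Finset.univ) := by
    intro x; rw [hMD]; simp
  have hMAmem : ∀ x, x ∈ MA ↔
      ((¬G.Adj a x ∧ ¬G.Adj b x ∧ ¬G.Adj cc x) ∧ τ x ≠ ∅ ∧ τ x ≠ Finset.univ) := by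
    intro x; rw [hMA]; simp
  have hnotuniv : ∀ s : Finset (Fin n), s ≠ Finset.univ → ∃ i, i ∉ s := by
    intro s hs
    by_contra hcon2
    push_neg at hcon2
    exact hs (Finset.eq_univ_iff_forall.mpr hcon2)
  have hDeq : ∀ x ∈ MD, ∀ y ∈ MD, ¬G.Adj x y → τ x ⊆ τ y → τ x = τ y := by
    intro x hx y hy hnadj hsub
    rw [hMDmem] at hx hy
    by_contra hne
    have hss : τ x ⊂ τ y := Finset.ssubset_iff_subset_ne.mpr ⟨hsub, hne⟩
    obtain ⟨i₀, hi₀⟩ := Finset.nonempty_iff_ne_empty.mpr hx.2.1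
    obtain ⟨i₁, hi₁y, hi₁x⟩ := Finset.exists_of_ssubset hss
    obtain ⟨i₂, hi₂⟩ := hnotuniv _ hy.2.2
    have Axi₀ : G.Adj x (ℓ i₀) := (hτmem x i₀).mp hi₀
    have Ayi₀ : G.Adj y (ℓ i₀) := (hτmem y i₀).mp (hsub hi₀)
    have Ayi₁ : G.Adj y (ℓ i₁) := (hτmem y i₁).mp hi₁y
    have hxyne : x ≠ y := by rintro rfl; exact hne rfl
    have h01 : i₀ ≠ i₁ := by rintro rfl; exact hi₁x hi₀
    have h20 : i₂ ≠ i₀ := by rintro rfl; exact hi₂ (hsub hi₀)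
    have h21 : i₂ ≠ i₁ := by rintro rfl; exact hi₂ hi₁y
    exact no_cogem h1 x (ℓ i₀) y (ℓ i₁) (ℓ i₂)
      Axi₀ Ayi₀.symm Ayi₁
      hnadj (fun h => hi₁x ((hτmem x i₁).mpr h)) (hnℓℓ i₀ i₁)
      (fun h => hi₂ (hsub ((hτmem x i₂).mpr h.symm)))
      (hnℓℓ i₂ i₀)
      (fun h => hi₂ ((hτmem y i₂).mpr h.symm))
      (hnℓℓ i₂ i₁)
      hxyne (hnotℓ x i₁ i₀ Axi₀) (hdℓℓ i₀ i₁ h01)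
      ((hnotℓ x i₂ i₀ Axi₀).symm) (hdℓℓ i₂ i₀ h20)
      ((hnotℓ y i₂ i₁ Ayi₁).symm) (hdℓℓ i₂ i₁ h21)
  have hDadj : ∀ x ∈ MD, ∀ y ∈ MD, τ x ≠ τ y → G.Adj x y := by
    intro x hx y hy hne
    by_contra hnadj
    by_cases hs1 : τ x ⊆ τ y
    · exact hne (hDeq x hx y hy hnadj hs1)
    · by_cases hs2 : τ y ⊆ τ x
      · exact hne (hDeq y hy x hx (fun h => hnadj h.symm) hs2).symm
      · obtain ⟨i, hix, hiy⟩ := Finset.not_subset.mp hs1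
        obtain ⟨i', hi'y, hi'x⟩ := Finset.not_subset.mp hs2
        rw [hMDmem] at hx hy
        have Axi : G.Adj x (ℓ i) := (hτmem x i).mp hix
        have Ayi' : G.Adj y (ℓ i') := (hτmem y i').mp hi'y
        have hii' : i ≠ i' := by rintro rfl; exact hi'x hix
        have hxyne : x ≠ y := by rintro rfl; exact hiy hix
        exact no_P5 h2 (ℓ i) x b y (ℓ i')
          Axi.symm hx.1.2.1.symm hy.1.2.1 Ayi'
          (fun h => hnbℓ i h.symm)
          (fun h => hiy ((hτmem y i).mpr h.symm))
          (hnℓℓ i i')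
          hnadj
          (fun h => hi'x ((hτmem x i').mpr h))
          (hnbℓ i')
          (hdℓb i) ((hnotℓ y i i' Ayi').symm) (hdℓℓ i i' hii')
          hxyne (hnotℓ x i' i Axi) ((hdℓb i').symm)
  -- MD trace count
  have hrepDex : ∀ t ∈ TD, ∃ x, x ∈ MD ∧ τ x = t := by
    intro t ht
    rw [hTD] at ht
    simpa [Finset.mem_image] using ht
  have hTDcard : TD.card ≤ k - 1 := by
    set repD : Finset (Fin n) → V :=
      fun t => if h : ∃ x, x ∈ MD ∧ τ x = t then h.choose else a with hrepD
    have hrep1 : ∀ t ∈ TD, repD t ∈ MD ∧ τ (repD t) = t := by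
      intro t ht
      have hex : ∃ x, x ∈ MD ∧ τ x = t := hrepDex t ht
      rw [hrepD]
      simp only [dif_pos hex]
      exact hex.choose_spec
    have hcard : TD.card ≤ ((Finset.univ : Finset (Fin k)).erase (φ b)).card := by
      apply Finset.card_le_card_of_injOn (fun t => φ (repD t))
      · intro t ht
        rw [Finset.mem_coe, Finset.mem_erase]
        refine ⟨?_, Finset.mem_univ _⟩
        have hadj : G.Adj b (repD t) := by
          have := (hMDmem (repD t)).mp (hrep1 t ht).1
          exact this.1.2.1
        exact (φ.valid hadj).symm
      · intro t ht t' ht' heq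
        by_contra hne
        have htau : τ (repD t) ≠ τ (repD t') := by
          rw [(hrep1 t ht).2, (hrep1 t' ht').2]; exact hne
        have hadj := hDadj _ (hrep1 t ht).1 _ (hrep1 t' ht').1 htau
        exact (φ.valid hadj) heq
    rw [Finset.card_erase_of_mem (Finset.mem_univ _)] at hcard
    simpa using hcard
  -- MA: adjacency forces comparability
  have hAcomp : ∀ x ∈ MA, ∀ y ∈ MA, G.Adj x y → τ x ⊆ τ y ∨ τ y ⊆ τ x := by
    intro x hx y hy hadj
    rw [hMAmem] at hx hy
    by_contra hcon2
    push_neg at hcon2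
    obtain ⟨i, hix, hiy⟩ := Finset.not_subset.mp hcon2.1
    obtain ⟨i', hi'y, hi'x⟩ := Finset.not_subset.mp hcon2.2
    have Axi : G.Adj x (ℓ i) := (hτmem x i).mp hix
    have Ayi' : G.Adj y (ℓ i') := (hτmem y i').mp hi'y
    have hii' : i ≠ i' := by rintro rfl; exact hi'x hix
    exact no_cogem h1 (ℓ i) x y (ℓ i') a
      Axi.symm hadj Ayi'
      (fun h => hiy ((hτmem y i).mpr h.symm))
      (hnℓℓ i i')
      (fun h => hi'x ((hτmem x i').mpr h))
      (hnaℓ i) hx.1.1 hy.1.1 (hnaℓ i')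
      ((hnotℓ y i i' Ayi').symm) (hdℓℓ i i' hii') (hnotℓ x i' i Axi)
      ((hdℓa i).symm) ((hnota x i Axi).symm) ((hnota y i' Ayi').symm) ((hdℓa i').symm)
  -- MA: nonadjacent with a common neighbour forces equal traces
  have hAkeyhalf : ∀ x ∈ MA, ∀ y ∈ MA, ¬G.Adj x y → x ≠ y →
      ∀ i₀, i₀ ∈ τ x → i₀ ∈ τ y → ∀ i₁, i₁ ∈ τ x → i₁ ∉ τ y → False := by
    intro x hx y hy hnadj hxyne i₀ hi₀x hi₀y i₁ hi₁x hi₁y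
    rw [hMAmem] at hx hy
    have Axi₀ : G.Adj x (ℓ i₀) := (hτmem x i₀).mp hi₀x
    have Ayi₀ : G.Adj y (ℓ i₀) := (hτmem y i₀).mp hi₀y
    have Axi₁ : G.Adj x (ℓ i₁) := (hτmem x i₁).mp hi₁x
    have h10 : i₁ ≠ i₀ := by rintro rfl; exact hi₁y hi₀y
    exact no_cogem h1 (ℓ i₁) x (ℓ i₀) y a
      Axi₁.symm Axi₀ Ayi₀.symm
      (hnℓℓ i₁ i₀)
      (fun h => hi₁y ((hτmem y i₁).mpr h.symm))
      hnadj
      (hnaℓ i₁) hx.1.1 (hnaℓ i₀) hy.1.1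
      (hdℓℓ i₁ i₀ h10) ((hnotℓ y i₁ i₀ Ayi₀).symm) hxyne
      ((hdℓa i₁).symm) ((hnota x i₀ Axi₀).symm) ((hdℓa i₀).symm) ((hnota y i₀ Ayi₀).symm)
  have hAkey : ∀ x ∈ MA, ∀ y ∈ MA, ¬G.Adj x y →
      ∀ i₀, i₀ ∈ τ x → i₀ ∈ τ y → τ x = τ y := by
    intro x hx y hy hnadj i₀ hi₀x hi₀y
    by_contra hne
    have hxyne : x ≠ y := by rintro rfl; exact hne rfl
    rcases (by
      by_contra hcon2
      push_neg at hcon2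
      exact hne (Finset.Subset.antisymm hcon2.1 hcon2.2) :
      ¬(τ x ⊆ τ y) ∨ ¬(τ y ⊆ τ x)) with hns | hns
    · obtain ⟨i₁, hi₁x, hi₁y⟩ := Finset.not_subset.mp hns
      exact hAkeyhalf x hx y hy hnadj hxyne i₀ hi₀x hi₀y i₁ hi₁x hi₁y
    · obtain ⟨i₁, hi₁y, hi₁x⟩ := Finset.not_subset.mp hns
      exact hAkeyhalf y hy x hx (fun h => hnadj h.symm) hxyne.symm i₀ hi₀y hi₀x i₁ hi₁y hi₁x
  -- representatives for TA
  set repA : Finset (Fin n) → V :=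
    fun t => if h : ∃ x, x ∈ MA ∧ τ x = t then h.choose else a with hrepA
  have hrepA1 : ∀ t ∈ TA, repA t ∈ MA ∧ τ (repA t) = t := by
    intro t ht
    have hex : ∃ x, x ∈ MA ∧ τ x = t := by
      rw [hTA] at ht
      simpa [Finset.mem_image] using ht
    rw [hrepA]
    simp only [dif_pos hex]
    exact hex.choose_spec
  have hTAne : ∀ t ∈ TA, t.Nonempty := by
    intro t ht
    have h := hrepA1 t ht
    have := ((hMAmem _).mp h.1).2.1
    rw [h.2] at this
    exact Finset.nonempty_iff_ne_empty.mpr this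
  -- pairwise disjoint families in TA are small
  have hTAdisj : ∀ F : Finset (Finset (Fin n)), F ⊆ TA →
      (∀ t ∈ F, ∀ t' ∈ F, t ≠ t' → Disjoint t t') → F.card ≤ c - 1 := by
    intro F hFsub hFdisj
    by_contra hcard
    push_neg at hcard
    have hc_le : c ≤ F.card := by omega
    obtain ⟨F', hF'sub, hF'card⟩ := Finset.exists_subset_card_eq hc_le
    set g : Fin c → Finset (Fin n) :=
      fun i => (F'.equivFin.symm (Fin.cast hF'card.symm i) : _).1 with hg
    have hgmem : ∀ i, g i ∈ F' := by
      intro i; rw [hg]; exact (F'.equivFin.symm _).2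
    have hgmemF : ∀ i, g i ∈ F := fun i => hF'sub (hgmem i)
    have hgmemTA : ∀ i, g i ∈ TA := fun i => hFsub (hgmemF i)
    have hginj : ∀ i j : Fin c, i ≠ j → g i ≠ g j := by
      intro i j hij hgeq
      rw [hg] at hgeq
      have h2 := F'.equivFin.symm.injective (Subtype.coe_injective hgeq)
      apply hij
      have h3 := congrArg Fin.val h2
      simp only [Fin.coe_cast] at h3
      exact Fin.ext h3
    set u : Fin c → Fin n := fun i => (hTAne (g i) (hgmemTA i)).choose with hu
    have humem : ∀ i, u i ∈ g i := fun i => (hTAne (g i) (hgmemTA i)).choose_spec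
    set Wf : Fin c → V := fun i => repA (g i) with hWf
    have hWmemMA : ∀ i, Wf i ∈ MA := fun i => (hrepA1 (g i) (hgmemTA i)).1
    have hWτ : ∀ i, τ (Wf i) = g i := fun i => (hrepA1 (g i) (hgmemTA i)).2
    have hWadj : ∀ i, G.Adj (Wf i) (ℓ (u i)) := by
      intro i
      apply (hτmem (Wf i) (u i)).mp
      rw [hWτ i]
      exact humem i
    have hWA : ∀ i, ¬G.Adj a (Wf i) ∧ ¬G.Adj b (Wf i) ∧ ¬G.Adj cc (Wf i) :=
      fun i => ((hMAmem _).mp (hWmemMA i)).1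
    apply no_P3cP2 h3 a b cc (fun i => ℓ (u i)) Wf hab hbc hnac hdac
    · intro i
      exact (hWadj i).symm
    · intro i
      exact ⟨hnaℓ _, hnbℓ _, hncℓ _, (hdℓa _).symm, (hdℓb _).symm, (hdℓc _).symm⟩
    · intro i
      exact ⟨(hWA i).1, (hWA i).2.1, (hWA i).2.2,
        (hnota (Wf i) (u i) (hWadj i)).symm, (hnotb (Wf i) (u i) (hWadj i)).symm,
        (hnotc (Wf i) (u i) (hWadj i)).symm⟩
    · intro i j hij
      have hgne : g i ≠ g j := hginj i j hij
      have hdisj : Disjoint (g i) (g j) := hFdisj _ (hgmemF i) _ (hgmemF j) hgne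
      have huij : u i ∉ g j := Finset.disjoint_left.mp hdisj (humem i)
      have huji : u j ∉ g i := Finset.disjoint_right.mp hdisj (humem j)
      have hune : u i ≠ u j := by rintro heq; exact huij (heq ▸ humem j)
      refine ⟨hnℓℓ _ _, ?_, ?_, hdℓℓ _ _ hune, ?_, ?_⟩
      · intro h
        have : u i ∈ τ (Wf j) := (hτmem (Wf j) (u i)).mpr h.symm
        rw [hWτ j] at this
        exact huij this
      · intro h
        rcases hAcomp (Wf i) (hWmemMA i) (Wf j) (hWmemMA j) h with hsub | hsub
        · have : u i ∈ τ (Wf j) := hsub (by rw [hWτ i]; exact humem i)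
          rw [hWτ j] at this
          exact huij this
        · have : u j ∈ τ (Wf i) := hsub (by rw [hWτ j]; exact humem j)
          rw [hWτ i] at this
          exact huji this
      · intro heq
        have := hWadj j
        rw [← heq] at this
        exact hnℓℓ (u i) (u j) this
      · intro heq
        apply hgne
        rw [← hWτ i, ← hWτ j, heq]
  -- TA trace count via height decomposition
  have hAadj2 : ∀ t1 ∈ TA, ∀ t2 ∈ TA, t1 ≠ t2 → (∃ i, i ∈ t1 ∧ i ∈ t2) →
      G.Adj (repA t1) (repA t2) := by
    intro t1 ht1 t2 ht2 hne ⟨i, hi1, hi2⟩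
    by_contra hnadj
    apply hne
    have := hAkey (repA t1) (hrepA1 t1 ht1).1 (repA t2) (hrepA1 t2 ht2).1 hnadj i
      (by rw [(hrepA1 t1 ht1).2]; exact hi1) (by rw [(hrepA1 t2 ht2).2]; exact hi2)
    rw [(hrepA1 t1 ht1).2, (hrepA1 t2 ht2).2] at this
    exact this
  set d : Finset (Fin n) → ℕ := fun t => (TA.filter (fun t' => t ⊂ t')).card with hd
  have hdk : ∀ t ∈ TA, d t ≤ k - 1 := by
    intro t ht
    set Ft : Finset (Finset (Fin n)) := insert t (TA.filter (fun t' => t ⊂ t')) with hFt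
    have htnotmem : t ∉ TA.filter (fun t' => t ⊂ t') := by
      intro h
      exact (Finset.mem_filter.mp h).2.2 (le_refl t)
    have hFtcard : Ft.card = d t + 1 := by
      rw [hFt, Finset.card_insert_of_notMem htnotmem, hd]
    have hFtTA : ∀ s ∈ Ft, s ∈ TA ∧ t ⊆ s := by
      intro s hs
      rcases Finset.mem_insert.mp hs with rfl | hs
      · exact ⟨ht, le_refl s⟩
      · exact ⟨(Finset.mem_filter.mp hs).1, (Finset.mem_filter.mp hs).2.subset⟩
    obtain ⟨i₀, hi₀⟩ := hTAne t ht
    have hcard2 : Ft.card ≤ (Finset.univ : Finset (Fin k)).card := by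
      apply Finset.card_le_card_of_injOn (fun s => φ (repA s))
      · intro s _; exact Finset.mem_univ _
      · intro t1 ht1 t2 ht2 heq
        by_contra hne
        have hadj := hAadj2 t1 (hFtTA t1 ht1).1 t2 (hFtTA t2 ht2).1 hne
          ⟨i₀, (hFtTA t1 ht1).2 hi₀, (hFtTA t2 ht2).2 hi₀⟩
        exact (φ.valid hadj) heq
    simp only [Finset.card_univ, Fintype.card_fin] at hcard2
    omega
  have hdmono : ∀ t ∈ TA, ∀ t' ∈ TA, t ⊂ t' → d t' < d t := by
    intro t ht t' ht' hss
    have hsub : insert t' (TA.filter (fun s => t' ⊂ s)) ⊆ TA.filter (fun s => t ⊂ s) := by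
      intro s hs
      rcases Finset.mem_insert.mp hs with rfl | hs
      · exact Finset.mem_filter.mpr ⟨ht', hss⟩
      · have := Finset.mem_filter.mp hs
        exact Finset.mem_filter.mpr ⟨this.1, hss.trans this.2⟩
    have htnotmem : t' ∉ TA.filter (fun s => t' ⊂ s) := by
      intro h
      exact (Finset.mem_filter.mp h).2.2 (le_refl t')
    have := Finset.card_le_card hsub
    rw [Finset.card_insert_of_notMem htnotmem] at this
    have e1 : d t = (TA.filter (fun s => t ⊂ s)).card := rfl
    have e2 : d t' = (TA.filter (fun s => t' ⊂ s)).card := rfl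
    omega
  have hfib : ∀ j : ℕ, (TA.filter (fun t => d t = j)).card ≤ c - 1 := by
    intro j
    apply hTAdisj _ (Finset.filter_subset _ _)
    intro t1 ht1 t2 ht2 hne
    have hh1 := Finset.mem_filter.mp ht1
    have hh2 := Finset.mem_filter.mp ht2
    by_contra hndisj
    obtain ⟨i, hi1, hi2⟩ := Finset.not_disjoint_iff.mp hndisj
    have hadj := hAadj2 t1 hh1.1 t2 hh2.1 hne ⟨i, hi1, hi2⟩
    have hcomp := hAcomp (repA t1) (hrepA1 t1 hh1.1).1 (repA t2) (hrepA1 t2 hh2.1).1 hadj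
    rw [(hrepA1 t1 hh1.1).2, (hrepA1 t2 hh2.1).2] at hcomp
    rcases hcomp with hsub | hsub
    · have := hdmono t1 hh1.1 t2 hh2.1 (Finset.ssubset_iff_subset_ne.mpr ⟨hsub, hne⟩)
      omega
    · have := hdmono t2 hh2.1 t1 hh1.1 (Finset.ssubset_iff_subset_ne.mpr ⟨hsub, hne.symm⟩)
      omega
  have hTAcard : TA.card ≤ k * (c - 1) := by
    have hsub : TA ⊆ (Finset.range k).biUnion (fun j => TA.filter (fun t => d t = j)) := by
      intro t ht
      apply Finset.mem_biUnion.mpr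
      refine ⟨d t, Finset.mem_range.mpr ?_, Finset.mem_filter.mpr ⟨ht, rfl⟩⟩
      have := hdk t ht
      omega
    calc TA.card ≤ _ := Finset.card_le_card hsub
      _ ≤ ∑ j ∈ Finset.range k, (TA.filter (fun t => d t = j)).card :=
          Finset.card_biUnion_le
      _ ≤ ∑ _j ∈ Finset.range k, (c - 1) := Finset.sum_le_sum (fun j _ => hfib j)
      _ = k * (c - 1) := by
          rw [Finset.sum_const, Finset.card_range, smul_eq_mul]
  -- the Sperner argument
  set F : Fin n → Finset ({t // t ∈ TD} ⊕ {t // t ∈ TA}) := fun i =>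
    Finset.univ.filter (fun s => Sum.elim (fun td => i ∈ td.1) (fun ta => i ∈ ta.1) s)
    with hF
  have hFmem : ∀ (i : Fin n) s, s ∈ F i ↔ Sum.elim (fun td => i ∈ td.1) (fun ta => i ∈ ta.1) s := by
    intro i s; rw [hF]; simp
  have hFnot : ∀ i j : Fin n, i ≠ j → ¬ (F i ⊆ F j) := by
    intro i j hij hsubF
    obtain ⟨x, hxi, hxj⟩ := crit_witness (by omega) hcrit (ℓ i) (ℓ j)
      (hdℓℓ i j hij) (hnℓℓ i j)
    have hadj : G.Adj x (ℓ i) := hxi.symm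
    have hnadj : ¬G.Adj x (ℓ j) := fun h => hxj h.symm
    have hmi : i ∈ τ x := (hτmem x i).mpr hadj
    have hmj : j ∉ τ x := fun h => hnadj ((hτmem x j).mp h)
    rcases hMIX x i j hadj hnadj with hxa | hxd
    · have hmemTA : τ x ∈ TA := by rw [hTA]; exact Finset.mem_image_of_mem τ hxa
      have hm1 : (Sum.inr ⟨τ x, hmemTA⟩ : {t // t ∈ TD} ⊕ {t // t ∈ TA}) ∈ F i :=
        (hFmem i _).mpr hmi
      have hm2 := (hFmem j _).mp (hsubF hm1)
      exact hmj hm2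
    · have hmemTD : τ x ∈ TD := by rw [hTD]; exact Finset.mem_image_of_mem τ hxd
      have hm1 : (Sum.inl ⟨τ x, hmemTD⟩ : {t // t ∈ TD} ⊕ {t // t ∈ TA}) ∈ F i :=
        (hFmem i _).mpr hmi
      have hm2 := (hFmem j _).mp (hsubF hm1)
      exact hmj hm2
  have hFinj : Function.Injective F := by
    intro i j heq
    by_contra hij
    exact hFnot i j hij (le_of_eq heq)
  set AA : Finset (Finset ({t // t ∈ TD} ⊕ {t // t ∈ TA})) :=
    Finset.univ.image F with hAA
  have hAAcard : AA.card = n := by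
    rw [hAA, Finset.card_image_of_injective _ hFinj]
    simp
  have hanti : IsAntichain (· ⊆ ·) (AA : Set (Finset ({t // t ∈ TD} ⊕ {t // t ∈ TA}))) := by
    intro s hs t ht hne hsubst
    simp only [hAA, Finset.coe_image, Set.mem_image, Finset.mem_coe, Finset.mem_univ,
      Finset.coe_univ, Set.image_univ, Set.mem_range] at hs ht
    obtain ⟨i, rfl⟩ := hs
    obtain ⟨j, rfl⟩ := ht
    have hij : i ≠ j := by rintro rfl; exact hne rfl
    exact hFnot i j hij hsubst
  have hsperner := IsAntichain.sperner hanti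
  rw [hAAcard] at hsperner
  have hcardα : Fintype.card ({t // t ∈ TD} ⊕ {t // t ∈ TA}) = TD.card + TA.card := by
    simp [Fintype.card_sum]
  have hmul : k * c = k * (c - 1) + k := by
    obtain ⟨c₁, rfl⟩ : ∃ c₁, c = c₁ + 1 := ⟨c - 1, by omega⟩
    simp [Nat.mul_succ]
  have hkc5 : 5 ≤ k * c := by
    have : k * 1 ≤ k * c := Nat.mul_le_mul_left k hc
    omega
  have hbound : Fintype.card ({t // t ∈ TD} ⊕ {t // t ∈ TA}) ≤ k * c - 1 := by
    rw [hcardα]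
    omega
  have h6 := KVCaux_choose_half_mono hbound
  have h7 : (k*c-1).choose ((k*c-1)/2) < (k*c).choose ((k*c)/2) := by
    have hh := KVCaux_choose_half_strict (n := k*c-1) (by omega)
    have heq2 : k*c-1+1 = k*c := by omega
    rw [heq2] at hh
    exact hh
  rw [hn] at *
  omega
end

section
/- For every natural number k ≥ 1, there are only finitely many k-vertex-critical (co-gem, 2P2)-free graphs; that is, there exists a natural number N (depending on k) such that every k-vertex-critical graph that is co-gem-free and 2P2-free has at most N vertices. -/
open SimpleGraph

section Auxiliary

/-- Forbidden configuration from `2P2`-freeness: two edges `a-b`, `c-d` with no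
edges between them. -/
lemma no2P2 {V : Type} {G : SimpleGraph V} (hfree : IsHFree G twoP2)
    {a b c d : V} (hab : G.Adj a b) (hcd : G.Adj c d)
    (hac : ¬ G.Adj a c) (had : ¬ G.Adj a d) (hbc : ¬ G.Adj b c) (hbd : ¬ G.Adj b d)
    (nac : a ≠ c) (nad : a ≠ d) (nbc : b ≠ c) (nbd : b ≠ d) : False := by
  apply hfree
  have nab : a ≠ b := hab.ne
  have ncd : c ≠ d := hcd.ne
  refine ⟨⟨⟨![a,b,c,d], ?_⟩, ?_⟩⟩
  · intro i j h
    fin_cases i <;> fin_cases j <;> simp_all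
  · intro i j
    change G.Adj (![a,b,c,d] i) (![a,b,c,d] j) ↔ _
    fin_cases i <;> fin_cases j <;>
      simp [twoP2, SimpleGraph.fromRel_adj, G.adj_comm, hab, hcd, hac, had, hbc, hbd]

/-- Forbidden configuration from co-gem-freeness: an induced path `a-b-c-d`
together with a vertex `e` anticomplete to it. -/
lemma nocogem {V : Type} {G : SimpleGraph V} (hfree : IsHFree G cogem)
    {a b c d e : V} (hab : G.Adj a b) (hbc : G.Adj b c) (hcd : G.Adj c d)
    (hac : ¬ G.Adj a c) (had : ¬ G.Adj a d) (hbd : ¬ G.Adj b d)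
    (hea : ¬ G.Adj e a) (heb : ¬ G.Adj e b) (hec : ¬ G.Adj e c) (hed : ¬ G.Adj e d)
    (nac : a ≠ c) (nad : a ≠ d) (nbd : b ≠ d)
    (nea : e ≠ a) (neb : e ≠ b) (nec : e ≠ c) (ned : e ≠ d) : False := by
  apply hfree
  have hae : ¬ G.Adj a e := fun h => hea h.symm
  have hbe : ¬ G.Adj b e := fun h => heb h.symm
  have hce : ¬ G.Adj c e := fun h => hec h.symm
  have hde : ¬ G.Adj d e := fun h => hed h.symm
  have nab : a ≠ b := hab.ne
  have nbc : b ≠ c := hbc.ne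
  have ncd : c ≠ d := hcd.ne
  refine ⟨⟨⟨![a,b,c,d,e], ?_⟩, ?_⟩⟩
  · intro i j h
    fin_cases i <;> fin_cases j <;> simp_all
  · intro i j
    change G.Adj (![a,b,c,d,e] i) (![a,b,c,d,e] j) ↔ _
    fin_cases i <;> fin_cases j <;>
      simp [cogem, SimpleGraph.fromRel_adj, G.adj_comm, hab, hbc, hcd, hac, had, hbd,
        hea, heb, hec, hed, hae, hbe, hce, hde]

/-- In a `k`-vertex-critical graph there is no pair of nonadjacent vertices `u ≠ v`
with `N(u) ⊆ N(v)`. -/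
lemma no_dominated {V : Type} {k : ℕ} {G : SimpleGraph V}
    (hcrit : IsKVertexCritical k G) {u v : V} (hne : u ≠ v)
    (hnadj : ¬ G.Adj u v) (hdom : ∀ w, G.Adj u w → G.Adj v w) : False := by
  classical
  obtain ⟨hchi, hlt⟩ := hcrit
  have h1 := hlt u
  have hk : 1 ≤ k := by
    by_contra h
    interval_cases k
    · simp at h1
  have hnetop : (G.induce {u}ᶜ).chromaticNumber ≠ ⊤ := h1.ne_top
  lift (G.induce {u}ᶜ).chromaticNumber to ℕ using hnetop with n hn
  have hnk : n < k := by exact_mod_cast h1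
  have hco : (G.induce {u}ᶜ).Colorable (k-1) := by
    have : (G.induce {u}ᶜ).Colorable n :=
      chromaticNumber_le_iff_colorable.mp (le_of_eq hn.symm)
    exact this.mono (by omega)
  obtain ⟨c⟩ := hco
  have hvmem : v ∈ ({u}ᶜ : Set V) := by simp [Ne.symm hne]
  have hcol : G.Colorable (k-1) := by
    refine ⟨Coloring.mk
      (fun w => if h : w ∈ ({u}ᶜ : Set V) then c ⟨w, h⟩ else c ⟨v, hvmem⟩) ?_⟩
    intro a b hadj
    by_cases ha : a ∈ ({u}ᶜ : Set V) <;> by_cases hb : b ∈ ({u}ᶜ : Set V)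
    · simp only [dif_pos ha, dif_pos hb]
      exact c.valid (by simpa [comap_adj] using hadj)
    · have hbu : b = u := by simpa using hb
      subst hbu
      simp only [dif_pos ha, dif_neg hb]
      have : G.Adj a v := (hdom a hadj.symm).symm
      exact c.valid (by simpa [comap_adj] using this)
    · have hau : a = u := by simpa using ha
      subst hau
      simp only [dif_neg ha, dif_pos hb]
      have : G.Adj v b := hdom b hadj
      exact c.valid (by simpa [comap_adj] using this)
    · have hau : a = u := by simpa using ha
      have hbu : b = u := by simpa using hb
      subst hau; subst hbu
      exact absurd hadj (G.irrefl)
  have hle := hcol.chromaticNumber_le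
  rw [hchi] at hle
  have : k ≤ k - 1 := by exact_mod_cast hle
  omega

/-- The recursive size bound: a graph that is `(k+1)`-clique-free and has no
independent set of size `a+1` has at most `bnd k a` vertices. -/
def bnd (k : ℕ) : ℕ → ℕ
  | 0 => 0
  | a+1 => k + k * bnd k a

lemma bnd_zero (k : ℕ) : bnd k 0 = 0 := rfl
lemma bnd_succ (k a : ℕ) : bnd k (a+1) = k + k * bnd k a := rfl

lemma card_le_of_alpha {V : Type} [Fintype V] {G : SimpleGraph V} {k : ℕ}
    (hcol : G.Colorable k) (a : ℕ) :
    ∀ A : Finset V,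
      (∀ I ⊆ A, (∀ x ∈ I, ∀ y ∈ I, x ≠ y → ¬ G.Adj x y) → I.card ≤ a) →
      A.card ≤ bnd k a := by
  classical
  induction a with
  | zero =>
    intro A hA
    rw [bnd_zero]
    by_contra h
    obtain ⟨x, hx⟩ := Finset.card_pos.mp (show 0 < A.card by omega)
    have := hA {x} (by simpa using hx) (by simp)
    simp at this
  | succ a ih =>
    intro A hA
    set cliques : Finset (Finset V) :=
      A.powerset.filter (fun K => G.IsClique (K : Set V)) with hcliq
    have hne : cliques.Nonempty := ⟨∅, by simp [hcliq]⟩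
    obtain ⟨K, hKmem, hKmax⟩ := Finset.exists_max_image cliques Finset.card hne
    have hKA : K ⊆ A := by
      have := (Finset.mem_filter.mp hKmem).1; simpa using this
    have hKclique : G.IsClique (K : Set V) := (Finset.mem_filter.mp hKmem).2
    have hKk : K.card ≤ k := hKclique.card_le_of_colorable hcol
    have hwit : ∀ x ∈ A \ K, ∃ w ∈ K, ¬ G.Adj x w := by
      intro x hx
      by_contra hcon
      push_neg at hcon
      have hxK : x ∉ K := (Finset.mem_sdiff.mp hx).2
      have : G.IsClique ((insert x K : Finset V) : Set V) := by
        rw [Finset.coe_insert]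
        exact hKclique.insert (fun y hy _ => hcon y hy)
      have hmem : insert x K ∈ cliques := by
        rw [hcliq, Finset.mem_filter, Finset.mem_powerset]
        exact ⟨Finset.insert_subset (Finset.mem_sdiff.mp hx).1 hKA, this⟩
      have := hKmax _ hmem
      rw [Finset.card_insert_of_notMem hxK] at this
      omega
    set f : V → V := fun x => if h : ∃ w ∈ K, ¬ G.Adj x w then h.choose else x with hf
    have hfK : ∀ x ∈ A \ K, f x ∈ K ∧ ¬ G.Adj x (f x) := by
      intro x hx
      have h := hwit x hx
      rw [hf]
      simp only [dif_pos h]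
      exact ⟨h.choose_spec.1, h.choose_spec.2⟩
    have hsum : (A \ K).card = ∑ w ∈ K, ((A \ K).filter (fun x => f x = w)).card :=
      Finset.card_eq_sum_card_fiberwise (fun x hx => (hfK x hx).1)
    have hfib : ∀ w ∈ K, ((A \ K).filter (fun x => f x = w)).card ≤ bnd k a := by
      intro w hw
      apply ih
      intro I hI hIindep
      have hIA : I ⊆ A \ K := hI.trans (Finset.filter_subset _ _)
      have hwI : w ∉ I := fun h => (Finset.mem_sdiff.mp (hIA h)).2 hw
      have key := hA (insert w I) ?_ ?_
      · rw [Finset.card_insert_of_notMem hwI] at key; omega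
      · exact Finset.insert_subset (hKA hw) (hIA.trans (Finset.sdiff_subset))
      · intro x hx y hy hxy
        rcases Finset.mem_insert.mp hx with rfl | hx'
        · rcases Finset.mem_insert.mp hy with rfl | hy'
          · exact absurd rfl hxy
          · have hy2 := Finset.mem_filter.mp (hI hy')
            have := (hfK y (hIA hy')).2
            rw [hy2.2] at this
            exact fun h => this h.symm
        · rcases Finset.mem_insert.mp hy with rfl | hy'
          · have hx2 := Finset.mem_filter.mp (hI hx')
            have := (hfK x (hIA hx')).2
            rw [hx2.2] at this
            exact this
          · exact hIindep x hx' y hy' hxy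
    have hsum2 : (A \ K).card ≤ K.card * bnd k a := by
      rw [hsum]
      calc ∑ w ∈ K, ((A \ K).filter (fun x => f x = w)).card
          ≤ ∑ _w ∈ K, bnd k a := Finset.sum_le_sum hfib
        _ = K.card * bnd k a := by rw [Finset.sum_const, smul_eq_mul]
    have : A.card ≤ K.card + (A \ K).card := by
      rw [← Finset.card_sdiff_add_card_eq_card hKA]; omega
    have hmul : K.card * bnd k a ≤ k * bnd k a := Nat.mul_le_mul_right _ hKk
    rw [bnd_succ]
    omega

/-- Core lemma: a `k`-vertex-critical (co-gem, `2P2`)-free graph has no independent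
set of more than `2^k` vertices. -/
lemma alpha_le {V : Type} [Fintype V] {k : ℕ} {G : SimpleGraph V}
    (hcrit : IsKVertexCritical k G) (hcol : G.Colorable k)
    (h2p2 : IsHFree G twoP2) (hcg : IsHFree G cogem)
    (I : Finset V) (hI : ∀ x ∈ I, ∀ y ∈ I, x ≠ y → ¬ G.Adj x y) :
    I.card ≤ 2^k := by
  classical
  set τ : V → Finset V := fun v => I.filter (fun s => G.Adj v s) with hτ
  have hτ_mem : ∀ v s, s ∈ τ v ↔ s ∈ I ∧ G.Adj v s := by
    intro v s; simp [hτ]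
  -- nested-type adjacency
  have nest : ∀ x y : V, x ∉ I → y ∉ I → τ x ≠ ∅ → τ y ≠ I → τ x ⊆ τ y →
      τ x ≠ τ y → G.Adj x y := by
    intro x y hxI hyI hxne hyprop hsub hne
    by_contra hxy
    obtain ⟨t, ht⟩ := Finset.nonempty_iff_ne_empty.mpr hxne
    obtain ⟨i, hiy, hix⟩ := Finset.exists_of_ssubset (Finset.ssubset_iff_subset_ne.mpr ⟨hsub, hne⟩)
    have hτyI : τ y ⊆ I := Finset.filter_subset _ _
    obtain ⟨j, hjI, hjy⟩ : ∃ j ∈ I, j ∉ τ y := by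
      by_contra hcon; push_neg at hcon
      exact hyprop (Finset.Subset.antisymm hτyI hcon)
    have htI : t ∈ I ∧ G.Adj x t := (hτ_mem x t).mp ht
    have hiI : i ∈ I ∧ G.Adj y i := (hτ_mem y i).mp hiy
    have hty : G.Adj y t := ((hτ_mem y t).mp (hsub ht)).2
    have hit : i ≠ t := fun h => hix (h ▸ ht)
    have hjt : j ≠ t := fun h => hjy (h ▸ hsub ht)
    have hji : j ≠ i := fun h => hjy (h ▸ hiy)
    have hjx : j ∉ τ x := fun h => hjy (hsub h)
    exact nocogem hcg (a := i) (b := y) (c := t) (d := x) (e := j)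
      hiI.2.symm hty htI.2.symm
      (hI i hiI.1 t htI.1 hit)
      (fun h => hix ((hτ_mem x i).mpr ⟨hiI.1, h.symm⟩))
      (fun h => hxy h.symm)
      (hI j hjI i hiI.1 hji)
      (fun h => hjy ((hτ_mem y j).mpr ⟨hjI, h.symm⟩))
      (hI j hjI t htI.1 hjt)
      (fun h => hjx ((hτ_mem x j).mpr ⟨hjI, h.symm⟩))
      hit (fun h => hxI (h ▸ hiI.1)) (fun h : y = x => hne (by rw [h]))
      hji (fun h => hyI (h ▸ hjI)) hjt (fun h => hxI (h ▸ hjI))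
  -- key adjacency lemma
  have key : ∀ x y : V, x ∉ I → y ∉ I → τ x ≠ ∅ → τ y ≠ ∅ → τ x ≠ I → τ y ≠ I →
      τ x ≠ τ y → G.Adj x y := by
    intro x y hxI hyI hxne hyne hxprop hyprop hne
    by_cases hxy : ∃ i ∈ τ x, i ∉ τ y
    · by_cases hyx : ∃ j ∈ τ y, j ∉ τ x
      · -- crossing
        obtain ⟨i, hix, hiy⟩ := hxy
        obtain ⟨j, hjy, hjx⟩ := hyx
        have hiI := (hτ_mem x i).mp hix
        have hjI := (hτ_mem y j).mp hjy
        by_contra hadj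
        have hij : i ≠ j := fun h => hjx (h ▸ hix)
        exact no2P2 h2p2 (a := x) (b := i) (c := y) (d := j)
          hiI.2 hjI.2 hadj
          (fun h => hjx ((hτ_mem x j).mpr ⟨(Finset.filter_subset _ _) hjy, h⟩))
          (fun h => hiy ((hτ_mem y i).mpr ⟨hiI.1, h.symm⟩))
          (hI i hiI.1 j ((Finset.filter_subset _ _) hjy : j ∈ I) hij)
          (fun h : x = y => hne (by rw [h]))
          (fun h => hxI (h ▸ ((Finset.filter_subset _ _) hjy : j ∈ I)))
          (fun h => hyI (h.symm ▸ hiI.1))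
          hij
      · push_neg at hyx
        exact (nest y x hyI hxI hyne hxprop hyx (Ne.symm hne)).symm
    · push_neg at hxy
      exact nest x y hxI hyI hxne hyprop hxy hne
  -- the set of proper nonempty types
  set W : Finset V := Finset.univ.filter (fun v => v ∉ I ∧ τ v ≠ ∅ ∧ τ v ≠ I) with hW
  set Types : Finset (Finset V) := W.image τ with hTy
  have hW_mem : ∀ v, v ∈ W ↔ v ∉ I ∧ τ v ≠ ∅ ∧ τ v ≠ I := by intro v; simp [hW]
  have hTypes_le : Types.card ≤ k := by
    rcases Finset.eq_empty_or_nonempty Types with h | h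
    · simp [h]
    · obtain ⟨T0, hT0⟩ := h
      obtain ⟨v0, hv0, _⟩ := Finset.mem_image.mp hT0
      set g : Finset V → V := fun T => if h : ∃ v ∈ W, τ v = T then h.choose else v0 with hg
      have hgW : ∀ T ∈ Types, g T ∈ W ∧ τ (g T) = T := by
        intro T hT
        obtain ⟨v, hv, hvT⟩ := Finset.mem_image.mp hT
        have hex : ∃ v ∈ W, τ v = T := ⟨v, hv, hvT⟩
        rw [hg]; simp only [dif_pos hex]
        exact ⟨hex.choose_spec.1, hex.choose_spec.2⟩
      have hginj : Set.InjOn g Types := by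
        intro T hT U hU hgu
        rw [← (hgW T hT).2, ← (hgW U hU).2, hgu]
      have hclique : G.IsClique ((Types.image g : Finset V) : Set V) := by
        intro x hx y hy hxyne
        simp only [Finset.coe_image, Set.mem_image, Finset.mem_coe] at hx hy
        obtain ⟨T, hT, rfl⟩ := hx
        obtain ⟨U, hU, rfl⟩ := hy
        have hTU : T ≠ U := fun h => hxyne (by rw [h])
        have h1 := hgW T hT
        have h2 := hgW U hU
        have p1 := (hW_mem _).mp h1.1
        have p2 := (hW_mem _).mp h2.1
        refine key _ _ p1.1 p2.1 p1.2.1 p2.2.1 p1.2.2 p2.2.2 ?_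
        rw [h1.2, h2.2]; exact hTU
      have hc1 : (Types.image g).card ≤ k := hclique.card_le_of_colorable hcol
      rwa [Finset.card_image_of_injOn hginj] at hc1
  -- witnesses
  have hwit : ∀ s ∈ I, ∀ t ∈ I, s ≠ t → ∃ x, G.Adj s x ∧ ¬ G.Adj t x := by
    intro s hs t ht hst
    by_contra hcon; push_neg at hcon
    exact no_dominated hcrit hst (hI s hs t ht hst) hcon
  -- trace map
  set σ : V → Finset (Finset V) := fun s => Types.filter (fun T => s ∈ T) with hσ
  have hinj : Set.InjOn σ I := by
    intro s hs t ht heq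
    by_contra hst
    obtain ⟨x, hsx, htx⟩ := hwit s hs t ht hst
    have hxI : x ∉ I := fun hx => hI s hs x hx hsx.ne hsx
    have hsτ : s ∈ τ x := (hτ_mem x s).mpr ⟨hs, hsx.symm⟩
    have htτ : t ∉ τ x := fun h => htx ((hτ_mem x t).mp h).2.symm
    have hxW : x ∈ W := (hW_mem x).mpr ⟨hxI,
      fun h => by simp [h] at hsτ,
      fun h => htτ (h ▸ ht)⟩
    have hxTy : τ x ∈ Types := Finset.mem_image_of_mem τ hxW
    have h1 : τ x ∈ σ s := by rw [hσ]; exact Finset.mem_filter.mpr ⟨hxTy, hsτ⟩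
    have h2 : τ x ∉ σ t := by rw [hσ]; exact fun h => htτ (Finset.mem_filter.mp h).2
    rw [heq] at h1
    exact h2 h1
  -- count
  have himg : I.image σ ⊆ Types.powerset := by
    intro T hT
    obtain ⟨s, _, rfl⟩ := Finset.mem_image.mp hT
    exact Finset.mem_powerset.mpr (Finset.filter_subset _ _)
  calc I.card = (I.image σ).card := (Finset.card_image_of_injOn hinj).symm
    _ ≤ (Types.powerset).card := Finset.card_le_card himg
    _ = 2 ^ Types.card := Finset.card_powerset _
    _ ≤ 2 ^ k := Nat.pow_le_pow_right (by norm_num) hTypes_le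

end Auxiliary

theorem finitely_many_kVertexCritical_cogem_2P2_free (k : ℕ) (hk : 1 ≤ k) :
    ∃ N : ℕ, ∀ (V : Type) [Fintype V] (G : SimpleGraph V),
      IsKVertexCritical k G → IsHFree G cogem → IsHFree G twoP2 →
      Fintype.card V ≤ N := by
  classical
  refine ⟨bnd k (2^k), ?_⟩
  intro V _ G hcrit hcg h2p2
  have hcol : G.Colorable k := chromaticNumber_le_iff_colorable.mp (le_of_eq hcrit.1)
  have h := card_le_of_alpha hcol (2^k) Finset.univ
    (fun I _ hIind => alpha_le hcrit hcol h2p2 hcg I hIind)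
  simpa using h
end

section
/- For every natural number k ≥ 1, every k-vertex-critical (co-gem, paw + P1)-free graph is (P3 + 2P1)-free. -/
open SimpleGraph

/-- Build a cogem in `G` from five vertices with the right (non-)adjacencies. -/
lemma make_cogem {V : Type} {G : SimpleGraph V} {p0 p1 p2 p3 p4 : V}
    (h01 : G.Adj p0 p1) (h12 : G.Adj p1 p2) (h23 : G.Adj p2 p3)
    (n02 : ¬G.Adj p0 p2) (n03 : ¬G.Adj p0 p3) (n13 : ¬G.Adj p1 p3)
    (n04 : ¬G.Adj p0 p4) (n14 : ¬G.Adj p1 p4) (n24 : ¬G.Adj p2 p4) (n34 : ¬G.Adj p3 p4) :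
    HasInducedSubgraph G cogem := by
  have e01 : p0 ≠ p1 := h01.ne
  have e12 : p1 ≠ p2 := h12.ne
  have e23 : p2 ≠ p3 := h23.ne
  have e02 : p0 ≠ p2 := fun h => n03 (h ▸ h23)
  have e03 : p0 ≠ p3 := fun h => n13 (h ▸ h01).symm
  have e13 : p1 ≠ p3 := fun h => n03 (h ▸ h01)
  have e04 : p0 ≠ p4 := fun h => n14 (h ▸ h01).symm
  have e14 : p1 ≠ p4 := fun h => n24 (h ▸ h12).symm
  have e24 : p2 ≠ p4 := fun h => n34 (h ▸ h23).symm
  have e34 : p3 ≠ p4 := fun h => n24 (h ▸ h23)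
  have s01 := h01.symm; have s12 := h12.symm; have s23 := h23.symm
  have m02 : ¬G.Adj p2 p0 := fun h => n02 h.symm
  have m03 : ¬G.Adj p3 p0 := fun h => n03 h.symm
  have m13 : ¬G.Adj p3 p1 := fun h => n13 h.symm
  have m04 : ¬G.Adj p4 p0 := fun h => n04 h.symm
  have m14 : ¬G.Adj p4 p1 := fun h => n14 h.symm
  have m24 : ¬G.Adj p4 p2 := fun h => n24 h.symm
  have m34 : ¬G.Adj p4 p3 := fun h => n34 h.symm
  refine ⟨⟨⟨![p0, p1, p2, p3, p4], ?_⟩, ?_⟩⟩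
  · intro i j hij
    fin_cases i <;> fin_cases j <;> simp_all
  · intro i j
    show G.Adj (![p0, p1, p2, p3, p4] i) (![p0, p1, p2, p3, p4] j) ↔ cogem.Adj i j
    fin_cases i <;> fin_cases j <;> simp_all [cogem, SimpleGraph.fromRel_adj]

/-- Build a paw+P₁ in `G` from five vertices with the right (non-)adjacencies. -/
lemma make_pawP1 {V : Type} {G : SimpleGraph V} {p0 p1 p2 p3 p4 : V}
    (h01 : G.Adj p0 p1) (h02 : G.Adj p0 p2) (h12 : G.Adj p1 p2) (h03 : G.Adj p0 p3)
    (n13 : ¬G.Adj p1 p3) (n23 : ¬G.Adj p2 p3)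
    (n04 : ¬G.Adj p0 p4) (n14 : ¬G.Adj p1 p4) (n24 : ¬G.Adj p2 p4) (n34 : ¬G.Adj p3 p4) :
    HasInducedSubgraph G pawP1 := by
  have e01 : p0 ≠ p1 := h01.ne
  have e02 : p0 ≠ p2 := h02.ne
  have e12 : p1 ≠ p2 := h12.ne
  have e03 : p0 ≠ p3 := h03.ne
  have e13 : p1 ≠ p3 := fun h => n23 (h ▸ h12).symm
  have e23 : p2 ≠ p3 := fun h => n13 (h ▸ h12)
  have e04 : p0 ≠ p4 := fun h => n14 (h ▸ h01).symm
  have e14 : p1 ≠ p4 := fun h => n24 (h ▸ h12).symm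
  have e24 : p2 ≠ p4 := fun h => n04 (h ▸ h02)
  have e34 : p3 ≠ p4 := fun h => n04 (h ▸ h03)
  have s01 := h01.symm; have s02 := h02.symm; have s12 := h12.symm; have s03 := h03.symm
  have m13 : ¬G.Adj p3 p1 := fun h => n13 h.symm
  have m23 : ¬G.Adj p3 p2 := fun h => n23 h.symm
  have m04 : ¬G.Adj p4 p0 := fun h => n04 h.symm
  have m14 : ¬G.Adj p4 p1 := fun h => n14 h.symm
  have m24 : ¬G.Adj p4 p2 := fun h => n24 h.symm
  have m34 : ¬G.Adj p4 p3 := fun h => n34 h.symm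
  refine ⟨⟨⟨![p0, p1, p2, p3, p4], ?_⟩, ?_⟩⟩
  · intro i j hij
    fin_cases i <;> fin_cases j <;> simp_all
  · intro i j
    show G.Adj (![p0, p1, p2, p3, p4] i) (![p0, p1, p2, p3, p4] j) ↔ pawP1.Adj i j
    fin_cases i <;> fin_cases j <;> simp_all [pawP1, SimpleGraph.fromRel_adj]

/-- In a vertex-critical graph, for nonadjacent `p ≠ q` the neighbourhood of `p`
is not contained in that of `q`. -/
lemma crit_neighbor {V : Type} [Fintype V] {k : ℕ} {G : SimpleGraph V} (hk : 1 ≤ k)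
    (hcrit : IsKVertexCritical k G) {p q : V} (hpq : p ≠ q) (hnadj : ¬G.Adj p q) :
    ∃ r, G.Adj p r ∧ ¬G.Adj q r := by
  by_contra hcon
  push_neg at hcon
  obtain ⟨hchrom, hdel⟩ := hcrit
  have h2 : (G.induce {p}ᶜ).chromaticNumber < (k : ℕ∞) := hdel p
  have hcast : (k : ℕ∞) = ((k - 1 : ℕ) : ℕ∞) + 1 := by
    conv_lhs => rw [show k = (k - 1) + 1 by omega]
    rw [Nat.cast_add, Nat.cast_one]
  have hle : (G.induce {p}ᶜ).chromaticNumber ≤ ((k - 1 : ℕ) : ℕ∞) := by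
    rw [hcast] at h2
    exact (ENat.lt_add_one_iff (by simp)).1 h2
  have hcol : (G.induce ({p}ᶜ : Set V)).Colorable (k - 1) :=
    SimpleGraph.chromaticNumber_le_iff_colorable.1 hle
  obtain ⟨c⟩ := hcol
  classical
  have hq : q ∈ ({p}ᶜ : Set V) := by simp [Ne.symm hpq]
  have hGcol : G.Colorable (k - 1) := by
    refine ⟨SimpleGraph.Coloring.mk
      (fun v => if hv : v ∈ ({p}ᶜ : Set V) then c ⟨v, hv⟩ else c ⟨q, hq⟩) ?_⟩
    intro v w hvw
    by_cases hv : v ∈ ({p}ᶜ : Set V) <;> by_cases hw : w ∈ ({p}ᶜ : Set V) <;>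
        simp only [hv, hw, dif_pos, dif_neg, dite_true, dite_false]
    · exact c.valid (by exact hvw : (G.induce _).Adj ⟨v, hv⟩ ⟨w, hw⟩)
    · -- w = p
      have hwp : w = p := by simpa using hw
      subst hwp
      have : G.Adj q v := hcon v hvw.symm
      exact fun hEq => c.valid (by exact this.symm : (G.induce _).Adj ⟨v, hv⟩ ⟨q, hq⟩) hEq
    · have hvp : v = p := by simpa using hv
      subst hvp
      have : G.Adj q w := hcon w hvw
      exact fun hEq => c.valid (by exact this : (G.induce _).Adj ⟨q, hq⟩ ⟨w, hw⟩) hEq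
    · exfalso
      have hvp : v = p := by simpa using hv
      have hwp : w = p := by simpa using hw
      rw [hvp, hwp] at hvw
      exact G.loopless.irrefl p hvw
  have : G.chromaticNumber ≤ ((k - 1 : ℕ) : ℕ∞) := hGcol.chromaticNumber_le
  rw [hchrom, hcast] at this
  exact lt_irrefl _ ((ENat.add_one_le_iff (by simp)).1 this)

theorem kVertexCritical_cogem_pawP1_free_is_P3_2P1_free
    (k : ℕ) (hk : 1 ≤ k) (V : Type) [Fintype V] (G : SimpleGraph V)
    (hcrit : IsKVertexCritical k G)
    (h1 : IsHFree G cogem) (h2 : IsHFree G pawP1) :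
    IsHFree G (P3cP1 2) := by
  rintro ⟨f⟩
  set a := f (Sum.inl 0) with ha
  set b := f (Sum.inl 1) with hb
  set c := f (Sum.inl 2) with hc
  set d := f (Sum.inr 0) with hd
  set e := f (Sum.inr 1) with he
  have adj : ∀ i j : Fin 3 ⊕ Fin 2, (P3cP1 2).Adj i j → G.Adj (f i) (f j) :=
    fun i j h => f.map_rel_iff.2 h
  have nadj : ∀ i j : Fin 3 ⊕ Fin 2, ¬(P3cP1 2).Adj i j → ¬G.Adj (f i) (f j) :=
    fun i j h hG => h (f.map_rel_iff.1 hG)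
  have dec : ∀ i j : Fin 3 ⊕ Fin 2, (P3cP1 2).Adj i j ↔
      (i ≠ j ∧ ((i = Sum.inl 0 ∧ j = Sum.inl 1) ∨ (i = Sum.inl 1 ∧ j = Sum.inl 2) ∨
        (j = Sum.inl 0 ∧ i = Sum.inl 1) ∨ (j = Sum.inl 1 ∧ i = Sum.inl 2))) := by
    intro i j
    rw [P3cP1, SimpleGraph.fromRel_adj]
    tauto
  have hab : G.Adj a b := adj _ _ (by rw [dec]; decide)
  have hbc : G.Adj b c := adj _ _ (by rw [dec]; decide)
  have nac : ¬G.Adj a c := nadj _ _ (by rw [dec]; decide)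
  have nad : ¬G.Adj a d := nadj _ _ (by rw [dec]; decide)
  have nbd : ¬G.Adj b d := nadj _ _ (by rw [dec]; decide)
  have ncd : ¬G.Adj c d := nadj _ _ (by rw [dec]; decide)
  have nae : ¬G.Adj a e := nadj _ _ (by rw [dec]; decide)
  have nbe : ¬G.Adj b e := nadj _ _ (by rw [dec]; decide)
  have nce : ¬G.Adj c e := nadj _ _ (by rw [dec]; decide)
  have nde : ¬G.Adj d e := nadj _ _ (by rw [dec]; decide)
  have hdne : d ≠ e := fun h => by
    have := f.injective h
    simp at this
  have hanc : a ≠ c := fun h => by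
    have := f.injective h
    simp at this
  -- criticality witnesses
  obtain ⟨x, dx, nex⟩ := crit_neighbor hk hcrit hdne nde
  obtain ⟨r, ar, ncr⟩ := crit_neighbor hk hcrit hanc nac
  -- symmetric versions
  have nxe : ¬G.Adj x e := fun h => nex h.symm
  have nrc : ¬G.Adj r c := fun h => ncr h.symm
  have nda : ¬G.Adj d a := fun h => nad h.symm
  have ndb : ¬G.Adj d b := fun h => nbd h.symm
  have ndc : ¬G.Adj d c := fun h => ncd h.symm
  have nea : ¬G.Adj e a := fun h => nae h.symm
  have neb : ¬G.Adj e b := fun h => nbe h.symm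
  have nec : ¬G.Adj e c := fun h => nce h.symm
  have ned : ¬G.Adj e d := fun h => nde h.symm
  by_cases hbx : G.Adj b x
  · by_cases hax : G.Adj a x
    · -- paw (x,a,b) pendant d, isolated e
      exact h2 (make_pawP1 hax.symm hbx.symm hab dx.symm nad nbd nxe nae nbe nde)
    · -- cogem a-b-x-d + e
      exact h1 (make_cogem hab hbx dx.symm hax nad nbd nae nbe nxe nde)
  · by_cases hax : G.Adj a x
    · -- cogem b-a-x-d + e
      exact h1 (make_cogem hab.symm hax dx.symm hbx nbd nad nbe nae nxe nde)
    · by_cases hcx : G.Adj c x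
      · -- cogem b-c-x-d + e
        exact h1 (make_cogem hbc hcx dx.symm hbx nbd ncd nbe nce nxe nde)
      · -- x is nonadjacent to a, b, c
        by_cases hrd : G.Adj r d
        · by_cases hrx : G.Adj r x
          · -- paw (r,d,x) pendant a, isolated c
            have nxa : ¬G.Adj x a := fun h => hax h.symm
            have nxc : ¬G.Adj x c := fun h => hcx h.symm
            exact h2 (make_pawP1 hrd hrx dx ar.symm nda nxa nrc ndc nxc nac)
          · -- use z = x
            by_cases hbr : G.Adj b r
            · -- paw (b,a,r) pendant c, isolated x
              have nxr : ¬G.Adj r x := hrx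
              exact h2 (make_pawP1 hab.symm hbr ar hbc nac nrc hbx hax nxr hcx)
            · -- cogem c-b-a-r + x
              exact h1 (make_cogem hbc.symm hab.symm ar (fun h => nac h.symm) ncr
                hbr hcx hbx hax hrx)
        · -- use z = d
          by_cases hbr : G.Adj b r
          · -- paw (b,a,r) pendant c, isolated d
            exact h2 (make_pawP1 hab.symm hbr ar hbc nac nrc nbd nad hrd ncd)
          · -- cogem c-b-a-r + d
            exact h1 (make_cogem hbc.symm hab.symm ar (fun h => nac h.symm) ncr
              hbr ncd nbd nad hrd)
end

section
/- Let G be a graph with chromatic number k. If G contains two disjoint m-cliques A = {a1, ..., am} and B = {b1, ..., bm} such that N(ai) \ A ⊆ N(bi) \ B for all 1 ≤ i ≤ m, then G is not k-vertex-critical. -/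
open SimpleGraph

theorem not_vertexCritical_of_comparable_cliques
    (V : Type) [Fintype V] (G : SimpleGraph V) (k m : ℕ) (hm : 1 ≤ m)
    (hchi : G.chromaticNumber = k)
    (a b : Fin m → V)
    (ha : Function.Injective a) (hb : Function.Injective b)
    (hdisj : Disjoint (Set.range a) (Set.range b))
    (hacl : ∀ i j : Fin m, i ≠ j → G.Adj (a i) (a j))
    (hbcl : ∀ i j : Fin m, i ≠ j → G.Adj (b i) (b j))
    (hN : ∀ i : Fin m,
      G.neighborSet (a i) \ Set.range a ⊆ G.neighborSet (b i) \ Set.range b) :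
    ¬ IsKVertexCritical k G := by
  
  rintro ⟨-, h2⟩
  classical
  set i0 : Fin m := ⟨0, hm⟩ with hi0
  have hlt := h2 (a i0)
  -- b j ≠ a i for all i j
  have hba : ∀ i j : Fin m, b j ≠ a i := by
    intro i j h
    exact (Set.disjoint_left.mp hdisj ⟨i, h.symm⟩) ⟨j, rfl⟩
  have hbmem : ∀ j : Fin m, b j ∈ ({a i0}ᶜ : Set V) := fun j => hba i0 j
  -- extract a natural coloring
  have hne : (G.induce {a i0}ᶜ).chromaticNumber ≠ ⊤ := (hlt.trans (lt_top_iff_ne_top.mpr (by simp))).ne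
  obtain ⟨n, hn⟩ := WithTop.ne_top_iff_exists.mp hne
  have hnk : (n : ℕ∞) < k := by rw [← hn] at hlt; exact hlt
  have hcol : (G.induce {a i0}ᶜ).Colorable n := chromaticNumber_le_iff_colorable.mp hn.ge
  obtain ⟨c⟩ := hcol
  -- build a coloring of G with n colors
  have hmem : ∀ v : V, v ∉ Set.range a → v ∈ ({a i0}ᶜ : Set V) := by
    intro v hv h
    exact hv ⟨i0, (Set.mem_singleton_iff.mp h).symm⟩
  let f : V → Fin n := fun v =>
    if h : ∃ i, a i = v then c ⟨b h.choose, hbmem _⟩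
    else c ⟨v, hmem v h⟩
  have hvalid : ∀ ⦃u v : V⦄, G.Adj u v → f u ≠ f v := by
    intro u v huv
    by_cases hu : ∃ i, a i = u <;> by_cases hv : ∃ i, a i = v
    · -- both in A
      simp only [f, dif_pos hu, dif_pos hv]
      have hij : hu.choose ≠ hv.choose := by
        intro h
        rw [← hu.choose_spec, ← hv.choose_spec, h] at huv
        exact huv.ne rfl
      have : (G.induce {a i0}ᶜ).Adj ⟨b hu.choose, hbmem _⟩ ⟨b hv.choose, hbmem _⟩ := by
        simpa [comap_adj] using hbcl _ _ hij
      exact c.valid this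
    · -- u in A, v not
      simp only [f, dif_pos hu, dif_neg hv]
      have hvN : v ∈ G.neighborSet (b hu.choose) \ Set.range b := by
        apply hN hu.choose
        refine ⟨by rw [hu.choose_spec]; exact huv, ?_⟩
        rintro ⟨i, rfl⟩; exact hv ⟨i, rfl⟩
      have : (G.induce {a i0}ᶜ).Adj ⟨b hu.choose, hbmem _⟩ ⟨v, hmem v hv⟩ := by
        simpa [comap_adj] using hvN.1
      exact c.valid this
    · -- v in A, u not
      simp only [f, dif_neg hu, dif_pos hv]
      have hvN : u ∈ G.neighborSet (b hv.choose) \ Set.range b := by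
        apply hN hv.choose
        refine ⟨by rw [hv.choose_spec]; exact huv.symm, ?_⟩
        rintro ⟨i, rfl⟩; exact hu ⟨i, rfl⟩
      have : (G.induce {a i0}ᶜ).Adj ⟨u, hmem u hu⟩ ⟨b hv.choose, hbmem _⟩ := by
        simpa [comap_adj] using hvN.1.symm
      exact fun h => c.valid this (h.symm ▸ rfl) -- fix
    · simp only [f, dif_neg hu, dif_neg hv]
      have : (G.induce {a i0}ᶜ).Adj ⟨u, hmem u hu⟩ ⟨v, hmem v hv⟩ := by simpa [comap_adj] using huv
      exact c.valid this
  have : G.Colorable n := ⟨SimpleGraph.Coloring.mk f (fun {u v} huv => hvalid huv)⟩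
  have := chromaticNumber_le_iff_colorable.mpr this
  rw [hchi] at this
  exact absurd (this.trans_lt hnk) (lt_irrefl _)
end

section
/- Let G be a co-gem-free graph, let S be an independent set of vertices of G, and let u1 and u2 be nonadjacent vertices of G, each of which is mixed on S (i.e., each has both a neighbour and a non-neighbour in S). Then N(u1) ∩ S is not a proper subset of N(u2) ∩ S. -/
open SimpleGraph

theorem cogem_free_mixed_neighbourhoods_not_ssubset
    (V : Type) [Fintype V] (G : SimpleGraph V) (hfree : IsHFree G cogem)
    (S : Set V) (hS : S.Pairwise (fun x y => ¬ G.Adj x y))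
    (u₁ u₂ : V) (h12 : ¬ G.Adj u₁ u₂)
    (hmix1 : (∃ s ∈ S, G.Adj u₁ s) ∧ (∃ s ∈ S, ¬ G.Adj u₁ s))
    (hmix2 : (∃ s ∈ S, G.Adj u₂ s) ∧ (∃ s ∈ S, ¬ G.Adj u₂ s)) :
    ¬ (G.neighborSet u₁ ∩ S ⊂ G.neighborSet u₂ ∩ S) := by
  intro hss
  obtain ⟨⟨s1, hs1S, hs1a⟩, -⟩ := hmix1
  obtain ⟨-, ⟨s3, hs3S, hs3n⟩⟩ := hmix2
  have hsub := hss.1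
  have hSind : ∀ a ∈ S, ∀ b ∈ S, ¬ G.Adj a b := by
    intro a ha b hb
    rcases eq_or_ne a b with rfl | hne
    · exact G.loopless.irrefl a
    · exact hS ha hb hne
  have hs1a2 : G.Adj u₂ s1 := (hsub ⟨hs1a, hs1S⟩).1
  obtain ⟨s2, hs2mem, hs2not⟩ := Set.exists_of_ssubset hss
  obtain ⟨hs2a2, hs2S⟩ := hs2mem
  have n03 : ¬ G.Adj u₁ s2 := fun h => hs2not ⟨h, hs2S⟩
  have n04 : ¬ G.Adj u₁ s3 := fun h => hs3n (hsub ⟨h, hs3S⟩).1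
  have n13 : ¬ G.Adj s1 s2 := hSind s1 hs1S s2 hs2S
  have n14 : ¬ G.Adj s1 s3 := hSind s1 hs1S s3 hs3S
  have n34 : ¬ G.Adj s2 s3 := hSind s2 hs2S s3 hs3S
  have a01 : G.Adj u₁ s1 := hs1a
  have a10 : G.Adj s1 u₁ := hs1a.symm
  have a12 : G.Adj s1 u₂ := hs1a2.symm
  have a21 : G.Adj u₂ s1 := hs1a2
  have a23 : G.Adj u₂ s2 := hs2a2
  have a32 : G.Adj s2 u₂ := hs2a2.symm
  have d02 : u₁ ≠ u₂ := fun h => n03 (h ▸ hs2a2)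
  have d03 : u₁ ≠ s2 := fun h => h12 (h ▸ hs2a2.symm)
  have d04 : u₁ ≠ s3 := fun h => n14 (h ▸ hs1a).symm
  have d13 : s1 ≠ s2 := fun h => n03 (h ▸ hs1a)
  have d14 : s1 ≠ s3 := fun h => hs3n (h ▸ hs1a2)
  have d24 : u₂ ≠ s3 := fun h => n34 (h ▸ hs2a2).symm
  have d34 : s2 ≠ s3 := fun h => hs3n (h ▸ hs2a2)
  have d01 : u₁ ≠ s1 := a01.ne
  have d12 : s1 ≠ u₂ := a12.ne
  have d23 : u₂ ≠ s2 := a23.ne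
  refine hfree ⟨⟨⟨![u₁, s1, u₂, s2, s3], ?_⟩, ?_⟩⟩
  · intro i j h
    fin_cases i <;> fin_cases j <;>
      simp only [Matrix.cons_val_zero, Matrix.cons_val_one, Matrix.head_cons, Matrix.cons_val_two,
        Matrix.tail_cons, Matrix.cons_val_three, Matrix.cons_val_four] at h <;>
      first | rfl | (exact absurd h (by assumption)) | (exact absurd h.symm (by assumption))
  · intro i j
    show G.Adj _ _ ↔ cogem.Adj _ _
    fin_cases i <;> fin_cases j <;>
      simp only [Matrix.cons_val_zero, Matrix.cons_val_one, Matrix.head_cons, Matrix.cons_val_two,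
        Matrix.tail_cons, Matrix.cons_val_three, Matrix.cons_val_four] <;>
      first
        | exact iff_of_true (by assumption) (by simp [cogem])
        | exact iff_of_false
            (fun h => by first | exact absurd h (by assumption)
                               | exact absurd h.symm (by assumption)
                               | exact h.ne rfl)
            (by simp [cogem])
end
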